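/- arXiv:1904.01452 — 3 statements merged into one kernel-verified Lean document; each statement's English description precedes it below -/
import Mathlib

section
/- If S ⊆ E(Γ) is a set of edges such that the spanning subgraph (V(Γ), S) contains a cycle, then the monomial G_S = ∧_{e∈S} G_e (the exterior product of the generators of all edges of S, taken in a fixed linear order on E(Γ)) lies in the ideal I(Γ). -/
/-!
Statement 2. If `S ⊆ E(Γ)` is a set of edges such that the spanning subgraph `(V(Γ), S)`
contains a cycle, then the monomial `G_S` (the ordered exterior product of the generators
of the edges of `S`) lies in the ideal `I(Γ)` generated by the boundaries of cycles.
-/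

noncomputable section

open scoped Classical

/-- The exterior algebra `Λ(Γ)` on the edges of a simple graph `Γ`. -/
abbrev GraphExt (k : Type) [CommRing k] {V : Type} (Γ : SimpleGraph V) : Type :=
  ExteriorAlgebra k (↥Γ.edgeSet → k)

/-- The generator `G_e` of `Λ(Γ)` corresponding to an edge `e` of `Γ`. -/
def gen (k : Type) [CommRing k] {V : Type} [DecidableEq V] (Γ : SimpleGraph V)
    (e : ↥Γ.edgeSet) : GraphExt k Γ :=
  ExteriorAlgebra.ι k (Pi.single e 1)

/-- The edge `{v_i, v_{i+1}}` of a cycle `v` (indices mod the length). -/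
def cycEdge {V : Type} (Γ : SimpleGraph V) {m : ℕ} (v : Fin (m + 3) → V)
    (h : ∀ i : Fin (m + 3), s(v i, v (i + 1)) ∈ Γ.edgeSet) (i : Fin (m + 3)) : ↥Γ.edgeSet :=
  ⟨s(v i, v (i + 1)), h i⟩

/-- `δ(s(v)) = Σ_j (−1)^j ⋅ (s(v) with its j-th exterior factor omitted)` (0-indexed). -/
def cycBoundary (k : Type) [CommRing k] {V : Type} [DecidableEq V] (Γ : SimpleGraph V) {m : ℕ}
    (v : Fin (m + 3) → V) (h : ∀ i : Fin (m + 3), s(v i, v (i + 1)) ∈ Γ.edgeSet) :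
    GraphExt k Γ :=
  ∑ j : Fin (m + 3),
    ((-1 : k) ^ (j : ℕ)) • ((List.ofFn fun i => gen k Γ (cycEdge Γ v h i)).eraseIdx j).prod

/-- The two-sided ideal `I(Γ)` of `Λ(Γ)` generated by the boundaries `δ(s(v))` of all
cycles `v` of `Γ` of length `≥ 3`. -/
def cycIdeal (k : Type) [CommRing k] {V : Type} [DecidableEq V] (Γ : SimpleGraph V) :
    Submodule k (GraphExt k Γ) :=
  Submodule.span k
    {z | ∃ (m : ℕ) (v : Fin (m + 3) → V)
        (h : ∀ i : Fin (m + 3), s(v i, v (i + 1)) ∈ Γ.edgeSet),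
      Function.Injective v ∧ ∃ p q : GraphExt k Γ, z = p * cycBoundary k Γ v h * q}

/-- `G_S`: the exterior product of the generators of the edges of `S`, taken in the fixed
linear order on the edges. -/
def edgeMonomial (k : Type) [CommRing k] {V : Type} [DecidableEq V] (Γ : SimpleGraph V)
    [LinearOrder ↥Γ.edgeSet] (S : Finset ↥Γ.edgeSet) : GraphExt k Γ :=
  (List.ofFn fun j : Fin S.card => gen k Γ (S.orderIsoOfFin rfl j : ↥Γ.edgeSet)).prod

/-- The spanning subgraph `(V(Γ), S)` contains a cycle: there is a cycle of `Γ` of length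
`≥ 3` all of whose edges belong to `S`. -/
def HasCycleIn {V : Type} (Γ : SimpleGraph V) (S : Finset ↥Γ.edgeSet) : Prop :=
  ∃ (m : ℕ) (v : Fin (m + 3) → V)
    (h : ∀ i : Fin (m + 3), s(v i, v (i + 1)) ∈ Γ.edgeSet),
    Function.Injective v ∧ ∀ i, cycEdge Γ v h i ∈ S

/-!
If `v` is a cycle with edges `e₀, …, eₙ` in `S`, then `G_{e₀} · δ(s(v)) = s(v)`: every other term
of `δ(s(v))` still contains the factor `G_{e₀}`, and `G_{e₀}² = 0`. Since the generators
anticommute, reordering `G_S` so that the cycle edges come first only changes its sign, so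
`±G_S = G_{e₀} · δ(s(v)) · G_{S ∖ v}` lies in `I(Γ)`.
-/

theorem List.Perm.prod_map_eq_or_eq_neg {A α : Type*} [Ring A] {g : α → A}
    (hg : ∀ a b, g a * g b = -(g b * g a))
    {l l' : List α} (h : l.Perm l') :
    (l.map g).prod = (l'.map g).prod ∨ (l.map g).prod = -(l'.map g).prod := by
  induction h with
  | nil => exact Or.inl rfl
  | cons _ _ ih => rcases ih with ih | ih <;> simp [ih]
  | swap a b _ => simp [← mul_assoc, hg b a]
  | trans _ _ ih₁ ih₂ =>
    rcases ih₁ with ih₁ | ih₁ <;> rcases ih₂ with ih₂ | ih₂ <;> simp [ih₁, ih₂]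

theorem mul_sum_eraseIdx_ofFn {R A : Type*} [CommRing R] [Ring A] [Algebra R A] {n : ℕ}
    (f : Fin (n + 1) → A) (hf : f 0 * f 0 = 0) :
    f 0 * ∑ j : Fin (n + 1), ((-1 : R) ^ (j : ℕ)) • ((List.ofFn f).eraseIdx j).prod =
      (List.ofFn f).prod := by
  rw [List.ofFn_succ, Finset.mul_sum, Fin.sum_univ_succ]
  simp [← mul_assoc, hf]

theorem List.perm_append_toList_sdiff {α : Type*} [DecidableEq α] {L l : List α}
    (hL : L.Nodup) (hl : l.Nodup) (hlL : l ⊆ L) :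
    L.Perm (l ++ (L.toFinset \ l.toFinset).toList) := by
  refine (List.perm_ext_iff_of_nodup hL (hl.append (Finset.nodup_toList _) ?_)).2 fun a => ?_
  · intro x hx hx'
    simp_all
  · by_cases a ∈ l <;> simp_all [hlL _]

theorem gen_mul_gen_anticomm (k : Type) [CommRing k] {V : Type} [DecidableEq V]
    (Γ : SimpleGraph V) (e f : Γ.edgeSet) : gen k Γ e * gen k Γ f = -(gen k Γ f * gen k Γ e) :=
  eq_neg_of_add_eq_zero_left (ExteriorAlgebra.ι_add_mul_swap _ _)

theorem edgeMonomial_eq_prod_orderEmbOfFin (k : Type) [CommRing k] {V : Type} [DecidableEq V]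
    (Γ : SimpleGraph V) [LinearOrder Γ.edgeSet] (S : Finset Γ.edgeSet) :
    edgeMonomial k Γ S = ((List.ofFn (S.orderEmbOfFin rfl)).map (gen k Γ)).prod := by
  rw [edgeMonomial, List.map_ofFn]
  rfl

/-- Two consecutive edges of a cycle coincide only if the cycle has length `2`. -/
theorem cycEdge_injective {V : Type} {Γ : SimpleGraph V} {m : ℕ} {v : Fin (m + 3) → V}
    (h : ∀ i : Fin (m + 3), s(v i, v (i + 1)) ∈ Γ.edgeSet) (hv : Function.Injective v) :
    Function.Injective (cycEdge Γ v h) := by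
  intro i j hij
  rcases Sym2.eq_iff.mp (congrArg Subtype.val hij) with ⟨hi, -⟩ | ⟨hi, hj⟩
  · exact hv hi
  · have hjj : j + 1 + 1 = j := by rw [← hv hi, hv hj]
    rw [add_assoc, add_eq_left, Fin.ext_iff, Fin.val_add, Fin.val_one, Fin.val_zero,
      Nat.mod_eq_of_lt (by omega)] at hjj
    omega

theorem gen_mul_cycBoundary (k : Type) [CommRing k] {V : Type} [DecidableEq V]
    (Γ : SimpleGraph V) {m : ℕ} (v : Fin (m + 3) → V)
    (h : ∀ i : Fin (m + 3), s(v i, v (i + 1)) ∈ Γ.edgeSet) :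
    gen k Γ (cycEdge Γ v h 0) * cycBoundary k Γ v h =
      ((List.ofFn (cycEdge Γ v h)).map (gen k Γ)).prod := by
  rw [List.map_ofFn]
  exact mul_sum_eraseIdx_ofFn (fun i => gen k Γ (cycEdge Γ v h i)) (ExteriorAlgebra.ι_sq_zero _)

theorem edgeMonomial_mem_cycIdeal_of_hasCycle
    (k : Type) [CommRing k] {V : Type} [DecidableEq V] (Γ : SimpleGraph V)
    [LinearOrder ↥Γ.edgeSet] (S : Finset ↥Γ.edgeSet) (hS : HasCycleIn Γ S) :
    edgeMonomial k Γ S ∈ cycIdeal k Γ := by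
  obtain ⟨m, v, h, hv, hvS⟩ := hS
  set sorted := List.ofFn (S.orderEmbOfFin rfl)
  set cycle := List.ofFn (cycEdge Γ v h)
  set rest := (sorted.toFinset \ cycle.toFinset).toList
  have hcycle : cycle ⊆ sorted := fun e he => by
    obtain ⟨i, rfl⟩ := List.mem_ofFn.1 he
    simpa [sorted, List.mem_ofFn, ← Set.mem_range] using hvS i
  have hperm : sorted.Perm (cycle ++ rest) :=
    List.perm_append_toList_sdiff (List.nodup_ofFn.2 (S.orderEmbOfFin rfl).injective)
      (List.nodup_ofFn.2 (cycEdge_injective h hv)) hcycle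
  have hmem : ((cycle ++ rest).map (gen k Γ)).prod ∈ cycIdeal k Γ :=
    Submodule.subset_span ⟨m, v, h, hv, gen k Γ (cycEdge Γ v h 0), (rest.map (gen k Γ)).prod,
      by rw [List.map_append, List.prod_append, gen_mul_cycBoundary]⟩
  rw [edgeMonomial_eq_prod_orderEmbOfFin]
  rcases hperm.prod_map_eq_or_eq_neg (gen_mul_gen_anticomm k Γ) with he | he <;> rw [he]
  exacts [hmem, neg_mem hmem]

end
end

section
/- Let Γ be a connected multigraph with n vertices. Then the homology of the complex of connected subgraphs C_conn(Γ) is concentrated in degree n−1: H_i(C_conn(Γ)) = 0 for every i ≠ n−1. -/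
/-!
Statement 9. Let `Γ` be a connected multigraph with `n` vertices (vertex set `V`, linearly
ordered edge set `E`, endpoint map `ends : E → Sym2 V`).  The complex of connected
subgraphs `C_conn(Γ)` (free abelian on connected spanning subgraphs with `i` edges, with
the edge-deletion differential) has homology concentrated in degree `n − 1`:
`H_i(C_conn(Γ)) = 0` for every `i ≠ n − 1`.
-/

noncomputable section

open scoped Classical

variable {V E : Type}

/-- One step of a walk: `x` and `y` are joined by an edge of `S`. -/
def StepRel (ends : E → Sym2 V) (S : Finset E) (x y : V) : Prop :=
  ∃ e ∈ S, ends e = s(x, y)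

/-- The spanning subgraph `(V, S)` is connected. -/
def IsConn (ends : E → Sym2 V) (S : Finset E) : Prop :=
  ∀ a b : V, Relation.ReflTransGen (StepRel ends S) a b

/-- Connected spanning subgraphs with `i` edges: the basis of `C_conn(Γ)_i`. -/
def ConnSub (ends : E → Sym2 V) (i : ℕ) : Type _ :=
  {S : Finset E // S.card = i ∧ IsConn ends S}

/-- The degree-`i` chain group of the complex of connected subgraphs. -/
abbrev CConn (ends : E → Sym2 V) (i : ℕ) : Type _ :=
  ConnSub ends i →₀ ℤ

/-- `ν(e, S)`: the number of edges of `S` strictly preceding `e`. -/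
def nuEdge [LinearOrder E] (e : E) (S : Finset E) : ℕ :=
  (S.filter fun f => f < e).card

/-- The differential of `C_conn(Γ)`:
`d(S) = Σ (−1)^{ν(e,S)} (S∖{e})`, the sum over those `e ∈ S` whose removal keeps `(V, S∖{e})`
connected. -/
noncomputable def bdry [DecidableEq E] [LinearOrder E] (ends : E → Sym2 V) (i : ℕ) :
    CConn ends (i + 1) →ₗ[ℤ] CConn ends i :=
  Finsupp.lsum ℤ fun S : ConnSub ends (i + 1) =>
    LinearMap.toSpanSingleton ℤ (CConn ends i)
      (∑ e ∈ S.1.attach,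
        if h : IsConn ends (S.1.erase e.1) then
          ((-1 : ℤ) ^ nuEdge e.1 S.1) •
            Finsupp.single
              (⟨S.1.erase e.1, by simp [Finset.card_erase_of_mem e.2, S.2.1], h⟩ :
                ConnSub ends i) 1
        else 0)

/-- `H_0` of the complex of connected subgraphs. -/
abbrev ConnH0 [DecidableEq E] [LinearOrder E] (ends : E → Sym2 V) : Type _ :=
  CConn ends 0 ⧸ LinearMap.range (bdry ends 0)

/-- `H_{i+1}` of the complex of connected subgraphs. -/
abbrev ConnH [DecidableEq E] [LinearOrder E] (ends : E → Sym2 V) (i : ℕ) : Type _ :=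
  ↥(LinearMap.ker (bdry ends i)) ⧸
    Submodule.comap (LinearMap.ker (bdry ends i)).subtype
      (LinearMap.range (bdry ends (i + 1)))

/-!
Write `C(P, F, A)` for the complex spanned by the edge sets `S` with `F ⊆ S ⊆ A` whose
connectivity relation is `P`, graded by `#(S \ F)`, with the edge-deletion differential on
`S \ F`; `C_conn(Γ)` is `C(⊤, ∅, E)`.  It is exact away from degree `c(F) - c(P)`, where `c`
counts classes, by induction on `A \ F`.  Let `e` be the largest edge of `A \ F`, with ends `x`,
`y`:
* if `¬ P x y`, no cell contains `e`, and `e` can be removed from `A`;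
* if `x` and `y` are linked by `F`, adding `e` is a contracting homotopy;
* otherwise the same homotopy moves a cycle onto the cells in which `e` is a bridge.  There it
  is a cycle of `C(P, F ∪ {e}, A)`, hence a boundary `d u`; contracting `e` turns `u` into a cycle
  of `C(P, F, A ∖ {e})`, hence a boundary `d v`, and `u - d (v ∪ {e})` is a chain on the bridge
  cells with boundary that cycle.
-/

namespace ConnComplex

open Finset

local notation "ℤ[" s "]" => Finsupp.supported ℤ ℤ s

section Linked

variable {ends : E → Sym2 V} {S T U : Finset E} {e : E} {x y a b : V}

def Linked (ends : E → Sym2 V) (S : Finset E) : V → V → Prop :=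
  Relation.ReflTransGen (StepRel ends S)

lemma isConn_iff_linked_eq_top : IsConn ends S ↔ Linked ends S = ⊤ := by
  refine ⟨fun h => ?_, fun h a b => ?_⟩
  · funext a b
    exact eq_true (h a b)
  · change Linked ends S a b
    rw [h]
    trivial

lemma stepRel_symm (h : StepRel ends S a b) : StepRel ends S b a := by
  obtain ⟨e, he, hab⟩ := h
  exact ⟨e, he, by rw [hab, Sym2.eq_swap]⟩

lemma linked_equivalence (ends : E → Sym2 V) (S : Finset E) : Equivalence (Linked ends S) :=
  have : Std.Symm (StepRel ends S) := ⟨fun _ _ => stepRel_symm⟩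
  ⟨fun _ => .refl, Std.Symm.symm (r := Relation.ReflTransGen (StepRel ends S)) _ _, .trans⟩

lemma quot_mk_eq_iff : Quot.mk (Linked ends S) a = Quot.mk _ b ↔ Linked ends S a b :=
  Quot.eq.trans (linked_equivalence ends S).eqvGen_iff

lemma linked_mono : Monotone (Linked ends) := fun _ _ hST =>
  Relation.ReflTransGen.mono fun _ _ ⟨f, hf, h⟩ => ⟨f, hST hf, h⟩

lemma linked_of_mem (he : e ∈ S) (hends : ends e = s(x, y)) : Linked ends S x y :=
  .single ⟨e, he, hends⟩

lemma linked_empty_iff : Linked ends ∅ a b ↔ a = b := by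
  rw [Linked, Relation.reflTransGen_iff_eq fun _ ⟨_, he, _⟩ => notMem_empty _ he, eq_comm]

lemma linked_insert_iff [DecidableEq E] (hends : ends e = s(x, y)) :
    Linked ends (insert e S) a b ↔ Linked ends S a b ∨
      (Linked ends S a x ∧ Linked ends S y b) ∨ (Linked ends S a y ∧ Linked ends S x b) := by
  have L := linked_equivalence ends S
  constructor
  · intro h
    induction h with
    | refl => exact .inl (L.refl _)
    | tail _ hstep ih =>
      obtain ⟨f, hf, hfc⟩ := hstep
      rcases mem_insert.mp hf with rfl | hfS
      · rw [hends] at hfc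
        rcases Sym2.eq_iff.mp hfc with ⟨rfl, rfl⟩ | ⟨rfl, rfl⟩
        · rcases ih with h | ⟨h, -⟩ | ⟨h, -⟩
          · exact .inr (.inl ⟨h, L.refl _⟩)
          · exact .inr (.inl ⟨h, L.refl _⟩)
          · exact .inl h
        · rcases ih with h | ⟨h, -⟩ | ⟨h, -⟩
          · exact .inr (.inr ⟨h, L.refl _⟩)
          · exact .inl h
          · exact .inr (.inr ⟨h, L.refl _⟩)
      · have hstep := linked_of_mem hfS hfc
        rcases ih with h | ⟨h, h'⟩ | ⟨h, h'⟩
        · exact .inl (L.trans h hstep)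
        · exact .inr (.inl ⟨h, L.trans h' hstep⟩)
        · exact .inr (.inr ⟨h, L.trans h' hstep⟩)
  · have L' := linked_equivalence ends (insert e S)
    have hxy : Linked ends (insert e S) x y := linked_of_mem (mem_insert_self e S) hends
    have hmono := linked_mono (ends := ends) (subset_insert e S)
    rintro (h | ⟨h, h'⟩ | ⟨h, h'⟩)
    · exact hmono _ _ h
    · exact L'.trans (hmono _ _ h) (L'.trans hxy (hmono _ _ h'))
    · exact L'.trans (hmono _ _ h) (L'.trans (L'.symm hxy) (hmono _ _ h'))

lemma linked_insert_of_linked [DecidableEq E] (hends : ends e = s(x, y)) (hxy : Linked ends S x y) :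
    Linked ends (insert e S) = Linked ends S := by
  have L := linked_equivalence ends S
  funext a b
  refine propext ⟨fun h => ?_, linked_mono (subset_insert e S) a b⟩
  rcases (linked_insert_iff hends).mp h with h | ⟨h, h'⟩ | ⟨h, h'⟩
  · exact h
  · exact L.trans h (L.trans hxy h')
  · exact L.trans h (L.trans (L.symm hxy) h')

lemma linked_insert_eq [DecidableEq E] {P : V → V → Prop} (hends : ends e = s(x, y))
    (hxy : P x y) (hS : Linked ends S = P) : Linked ends (insert e S) = P :=
  (linked_insert_of_linked hends (by rwa [hS])).trans hS

lemma linked_eq_of_subset_of_subset {P : V → V → Prop} (hST : S ⊆ T) (hTU : T ⊆ U)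
    (hS : Linked ends S = P) (hU : Linked ends U = P) : Linked ends T = P :=
  le_antisymm (hU ▸ linked_mono hTU) (hS ▸ linked_mono hST)

end Linked

section NumClasses

variable {ends : E → Sym2 V} {F : Finset E} {e : E} {x y : V}

def numClasses (R : V → V → Prop) : ℕ :=
  Nat.card (Quot R)

lemma numClasses_top_add_card_sub_one [Finite V] :
    numClasses (⊤ : V → V → Prop) + (Nat.card V - 1) = Nat.card V := by
  rcases isEmpty_or_nonempty V with hV | hV
  · simp [numClasses]
  · have : Subsingleton (Quot (⊤ : V → V → Prop)) :=
      ⟨Quot.ind fun _ => Quot.ind fun _ => Quot.sound trivial⟩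
    have : Nonempty (Quot (⊤ : V → V → Prop)) := ⟨Quot.mk _ hV.some⟩
    have := Nat.card_pos (α := V)
    rw [numClasses, Nat.card_unique]
    omega

lemma numClasses_linked_empty : numClasses (Linked ends ∅) = Nat.card V :=
  Nat.card_eq_of_bijective _
    ⟨fun _ _ h => linked_empty_iff.mp (quot_mk_eq_iff.mp h), Quot.mk_surjective⟩ |>.symm

/-- The classes other than that of `y` correspond to the classes after adding `e`. -/
lemma numClasses_insert [Finite V] [DecidableEq E] (hends : ends e = s(x, y))
    (hxy : ¬ Linked ends F x y) :
    numClasses (Linked ends (insert e F)) + 1 = numClasses (Linked ends F) := by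
  have L := linked_equivalence ends F
  let φ : {c : Quot (Linked ends F) // c ≠ Quot.mk _ y} → Quot (Linked ends (insert e F)) :=
    fun c => Quot.map id (linked_mono (subset_insert e F)) c.1
  have hφ : Function.Bijective φ := by
    refine ⟨?_, Quot.ind fun a => ?_⟩
    · rintro ⟨c, hc⟩ ⟨c', hc'⟩ h
      induction c using Quot.ind
      induction c' using Quot.ind
      rcases (linked_insert_iff hends).mp (quot_mk_eq_iff.mp h) with h | ⟨-, h⟩ | ⟨h, -⟩
      · exact Subtype.ext (quot_mk_eq_iff.mpr h)
      · exact absurd (quot_mk_eq_iff.mpr (L.symm h)) hc'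
      · exact absurd (quot_mk_eq_iff.mpr h) hc
    · by_cases hay : Linked ends F a y
      · refine ⟨⟨Quot.mk _ x, fun h => hxy (quot_mk_eq_iff.mp h)⟩, quot_mk_eq_iff.mpr ?_⟩
        exact (linked_insert_iff hends).mpr (.inr (.inl ⟨L.refl x, L.symm hay⟩))
      · exact ⟨⟨Quot.mk _ a, fun h => hay (quot_mk_eq_iff.mp h)⟩, rfl⟩
  rw [numClasses, ← Nat.card_congr (Equiv.ofBijective φ hφ), numClasses,
    ← Nat.card_congr (Equiv.optionSubtypeNe (Quot.mk _ y)), Finite.card_option]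

end NumClasses

section Supported

variable {α R M : Type*} [Semiring R] [AddCommMonoid M] [Module R M] {s : Set α} {z : α →₀ R}

lemma eqOn_supported {L L' : (α →₀ R) →ₗ[R] M}
    (h : ∀ a ∈ s, L (Finsupp.single a 1) = L' (Finsupp.single a 1))
    (hz : z ∈ Finsupp.supported R R s) : L z = L' z := by
  rw [Finsupp.supported_eq_span_single] at hz
  exact LinearMap.eqOn_span' (by rintro _ ⟨a, ha, rfl⟩; exact h a ha) hz

lemma map_mem_of_supported {L : (α →₀ R) →ₗ[R] M} {p : Submodule R M}
    (h : ∀ a ∈ s, L (Finsupp.single a 1) ∈ p) (hz : z ∈ Finsupp.supported R R s) :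
    L z ∈ p := by
  rw [Finsupp.supported_eq_span_single] at hz
  have : Submodule.span R ((Finsupp.single · 1) '' s) ≤ p.comap L :=
    Submodule.span_le.mpr (by rintro _ ⟨a, ha, rfl⟩; exact h a ha)
  exact this hz

end Supported

section Signs

variable [LinearOrder E] {M : Finset E} {e f g : E}

lemma nuEdge_insert_of_lt (h : f < e) : nuEdge f (insert e M) = nuEdge f M := by
  rw [nuEdge, filter_insert, if_neg (lt_asymm h), nuEdge]

lemma nuEdge_insert_self (hM : ∀ f ∈ M, f < e) : nuEdge e (insert e M) = #M := by
  rw [nuEdge, filter_insert, if_neg (lt_irrefl e), filter_true_of_mem hM]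

lemma nuEdge_erase_of_lt (h : f < g) : nuEdge f (M.erase g) = nuEdge f M := by
  rw [nuEdge, nuEdge, filter_erase, erase_eq_of_notMem (by simp [lt_asymm h])]

lemma nuEdge_erase_add_one_of_lt (h : g < f) (hg : g ∈ M) :
    nuEdge f (M.erase g) + 1 = nuEdge f M := by
  rw [nuEdge, nuEdge, filter_erase, card_erase_add_one (mem_filter.mpr ⟨hg, h⟩)]

lemma nuEdge_eq_card_erase (hM : ∀ f ∈ M, f ≤ e) : nuEdge e M = #(M.erase e) := by
  rw [nuEdge]
  congr 1
  ext f
  simp only [mem_filter, mem_erase]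
  exact ⟨fun ⟨hf, hlt⟩ => ⟨hlt.ne, hf⟩,
    fun ⟨hne, hf⟩ => ⟨hf, (hM f hf).lt_of_ne hne⟩⟩

lemma neg_one_pow_nuEdge_swap (hf : f ∈ M) (hg : g ∈ M) (hfg : f ≠ g) :
    (-1 : ℤ) ^ (nuEdge f M + nuEdge g (M.erase f)) =
      -(-1) ^ (nuEdge g M + nuEdge f (M.erase g)) := by
  rcases hfg.lt_or_gt with h | h
  · rw [nuEdge_erase_of_lt h, ← nuEdge_erase_add_one_of_lt h hf]
    ring
  · rw [nuEdge_erase_of_lt h, ← nuEdge_erase_add_one_of_lt h hg]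
    ring

end Signs

section Complex

variable [LinearOrder E] (ends : E → Sym2 V) (P : V → V → Prop)

/-- The basis of `C(P, F, A)` in degree `j`.  The edges of `F` are never deleted: they play the
role of contracted edges. -/
def cells (F A : Finset E) (j : ℕ) : Set (Finset E) :=
  {S | F ⊆ S ∧ S ⊆ A ∧ Linked ends S = P ∧ #(S \ F) = j}

def bd (F : Finset E) : (Finset E →₀ ℤ) →ₗ[ℤ] Finset E →₀ ℤ :=
  Finsupp.linearCombination ℤ fun S => ∑ f ∈ S \ F,
    if Linked ends (S.erase f) = P then
      (-1 : ℤ) ^ nuEdge f (S \ F) • Finsupp.single (S.erase f) 1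
    else 0

def ExactAt (F A : Finset E) (j : ℕ) : Prop :=
  ∀ z ∈ ℤ[cells ends P F A j], bd ends P F z = 0 →
    ∃ w ∈ ℤ[cells ends P F A (j + 1)], bd ends P F w = z

variable {ends P} {F A S : Finset E} {e : E} {x y : V} {j : ℕ} {z : Finset E →₀ ℤ}

lemma mem_cells :
    S ∈ cells ends P F A j ↔ F ⊆ S ∧ S ⊆ A ∧ Linked ends S = P ∧ #(S \ F) = j :=
  Iff.rfl

lemma bd_single : bd ends P F (Finsupp.single S 1) = ∑ f ∈ S \ F,
    if Linked ends (S.erase f) = P then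
      (-1 : ℤ) ^ nuEdge f (S \ F) • Finsupp.single (S.erase f) 1
    else 0 := by
  rw [bd, Finsupp.linearCombination_single, one_smul]

lemma bd_mem_supported (hz : z ∈ ℤ[cells ends P F A (j + 1)]) :
    bd ends P F z ∈ ℤ[cells ends P F A j] := by
  refine map_mem_of_supported (fun S hS => ?_) hz
  obtain ⟨hFS, hSA, -, hcard⟩ := mem_cells.mp hS
  rw [bd_single]
  refine Submodule.sum_mem _ fun f hf => ?_
  split_ifs with hc
  · refine Submodule.smul_mem _ _
      (Finsupp.single_mem_supported ℤ _ (mem_cells.mpr ⟨?_, ?_, hc, ?_⟩))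
    · exact subset_erase.mpr ⟨hFS, (mem_sdiff.mp hf).2⟩
    · exact (erase_subset f S).trans hSA
    · rw [erase_sdiff_comm, card_erase_of_mem hf, hcard, Nat.add_sub_cancel]
  · exact zero_mem _

lemma bd_bd_single (hS : Linked ends S = P) :
    bd ends P F (bd ends P F (Finsupp.single S 1)) = 0 := by
  set M := S \ F
  set T : E → E → Finset E →₀ ℤ := fun f g =>
    if Linked ends ((S.erase f).erase g) = P then
      (-1 : ℤ) ^ (nuEdge f M + nuEdge g (M.erase f)) • Finsupp.single ((S.erase f).erase g) 1
    else 0 with hT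
  have hexpand : bd ends P F (bd ends P F (Finsupp.single S 1)) =
      ∑ f ∈ M, ∑ g ∈ M.erase f, T f g := by
    rw [bd_single, map_sum]
    refine sum_congr rfl fun f _ => ?_
    split_ifs with hc
    · rw [map_smul, bd_single, erase_sdiff_comm, smul_sum]
      refine sum_congr rfl fun g _ => ?_
      simp only [hT]
      split_ifs
      · rw [smul_smul, ← pow_add]
      · rw [smul_zero]
    · rw [map_zero]
      refine (sum_eq_zero fun g _ => if_neg fun h => hc ?_).symm
      exact linked_eq_of_subset_of_subset (erase_subset g _) (erase_subset f S) h hS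
  have hanti : ∀ f ∈ M, ∀ g ∈ M.erase f, T g f = -T f g := by
    intro f hf g hg
    obtain ⟨hgf, hg⟩ := mem_erase.mp hg
    simp only [hT, erase_right_comm (s := S) (a := g)]
    split_ifs
    · rw [neg_one_pow_nuEdge_swap hg hf hgf, neg_smul]
    · rw [neg_zero]
  have hswap : ∑ f ∈ M, ∑ g ∈ M.erase f, T f g = ∑ f ∈ M, ∑ g ∈ M.erase f, T g f :=
    sum_comm' fun f g => by simp only [mem_erase]; tauto
  rw [hexpand]
  refine self_eq_neg.mp ?_
  calc _ = ∑ f ∈ M, ∑ g ∈ M.erase f, T g f := hswap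
    _ = _ := by
      simp only [← sum_neg_distrib]
      exact sum_congr rfl fun f hf => sum_congr rfl (hanti f hf)

lemma bd_bd (hz : z ∈ ℤ[cells ends P F A j]) :
    bd ends P F (bd ends P F z) = 0 :=
  eqOn_supported (L := bd ends P F ∘ₗ bd ends P F) (L' := 0)
    (fun _ hS => bd_bd_single hS.2.2.1) hz

lemma bd_eq_zero_of_mem_supported_cells_zero (hz : z ∈ ℤ[cells ends P F A 0]) :
    bd ends P F z = 0 :=
  eqOn_supported (L' := 0)
    (fun _ hS => by rw [bd_single, card_eq_zero.mp (mem_cells.mp hS).2.2.2, sum_empty]; rfl) hz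

end Complex

section Homotopy

variable [LinearOrder E] {ends : E → Sym2 V} {P : V → V → Prop} {F A S : Finset E} {e : E}
  {x y : V} {j : ℕ} {z : Finset E →₀ ℤ}

/-- `(-1) ^ #(S \ F)` is the sign of `e` in `insert e S \ F` when `e` is the largest edge
outside `F`. -/
def edgeHomotopy (e : E) (F : Finset E) : (Finset E →₀ ℤ) →ₗ[ℤ] Finset E →₀ ℤ :=
  Finsupp.linearCombination ℤ fun S =>
    if e ∈ S then 0 else (-1 : ℤ) ^ #(S \ F) • Finsupp.single (insert e S) 1

lemma edgeHomotopy_single : edgeHomotopy e F (Finsupp.single S 1) =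
    if e ∈ S then 0 else (-1 : ℤ) ^ #(S \ F) • Finsupp.single (insert e S) 1 := by
  rw [edgeHomotopy, Finsupp.linearCombination_single, one_smul]

lemma edgeHomotopy_mem_supported (hends : ends e = s(x, y)) (hxy : P x y) (he : e ∈ A \ F)
    (hz : z ∈ ℤ[cells ends P F A j]) :
    edgeHomotopy e F z ∈ ℤ[cells ends P F A (j + 1)] := by
  obtain ⟨heA, heF⟩ := mem_sdiff.mp he
  refine map_mem_of_supported (fun S hS => ?_) hz
  obtain ⟨hFS, hSA, hP, hcard⟩ := mem_cells.mp hS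
  rw [edgeHomotopy_single]
  split_ifs with heS
  · exact zero_mem _
  refine Submodule.smul_mem _ _
    (Finsupp.single_mem_supported ℤ _ (mem_cells.mpr ⟨?_, ?_, ?_, ?_⟩))
  · exact hFS.trans (subset_insert e S)
  · exact insert_subset heA hSA
  · exact linked_insert_eq hends hxy hP
  · rw [insert_sdiff_of_notMem _ heF, card_insert_of_notMem fun h => heS (mem_sdiff.mp h).1, hcard]

lemma bd_edgeHomotopy_add_of_mem (heS : e ∈ S) (heF : e ∉ F) (hmax : ∀ f ∈ S \ F, f ≤ e) :
    bd ends P F (edgeHomotopy e F (Finsupp.single S 1)) +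
        edgeHomotopy e F (bd ends P F (Finsupp.single S 1)) =
      if Linked ends (S.erase e) = P then Finsupp.single S 1 else 0 := by
  rw [edgeHomotopy_single, if_pos heS, map_zero, zero_add, bd_single, map_sum,
    sum_eq_single_of_mem e (mem_sdiff.mpr ⟨heS, heF⟩)]
  · split_ifs
    · rw [map_smul, edgeHomotopy_single, if_neg (notMem_erase e S), erase_sdiff_comm,
        insert_erase heS, smul_smul, ← pow_add, ← nuEdge_eq_card_erase hmax,
        Even.neg_one_pow ⟨_, rfl⟩, one_smul]
    · rw [map_zero]
  · intro f _ hfe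
    split_ifs
    · rw [map_smul, edgeHomotopy_single, if_pos (mem_erase.mpr ⟨hfe.symm, heS⟩), smul_zero]
    · rw [map_zero]

lemma bd_edgeHomotopy_single_of_notMem (heS : e ∉ S) (heF : e ∉ F) (hS : Linked ends S = P)
    (hlt : ∀ f ∈ S \ F, f < e) :
    bd ends P F (edgeHomotopy e F (Finsupp.single S 1)) =
      Finsupp.single S 1 + (-1 : ℤ) ^ #(S \ F) • ∑ f ∈ S \ F,
        if Linked ends (insert e (S.erase f)) = P then
          (-1 : ℤ) ^ nuEdge f (S \ F) • Finsupp.single (insert e (S.erase f)) 1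
        else 0 := by
  rw [edgeHomotopy_single, if_neg heS, map_smul, bd_single, insert_sdiff_of_notMem _ heF,
    sum_insert fun h => heS (mem_sdiff.mp h).1, erase_insert heS, if_pos hS,
    nuEdge_insert_self hlt, smul_add, smul_smul, ← pow_add, Even.neg_one_pow ⟨_, rfl⟩,
    one_smul]
  congr 2
  refine sum_congr rfl fun f hf => ?_
  rw [erase_insert_of_ne (hlt f hf).ne', nuEdge_insert_of_lt (hlt f hf)]

lemma edgeHomotopy_bd_single_of_notMem (heS : e ∉ S) :
    edgeHomotopy e F (bd ends P F (Finsupp.single S 1)) =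
      ∑ f ∈ S \ F, if Linked ends (S.erase f) = P then
          (-1 : ℤ) ^ (nuEdge f (S \ F) + #(S.erase f \ F)) •
            Finsupp.single (insert e (S.erase f)) 1
        else 0 := by
  rw [bd_single, map_sum]
  refine sum_congr rfl fun f _ => ?_
  split_ifs
  · rw [map_smul, edgeHomotopy_single, if_neg fun h => heS (mem_of_mem_erase h), smul_smul,
      ← pow_add]
  · rw [map_zero]

lemma bd_edgeHomotopy_add_of_notMem (hends : ends e = s(x, y)) (hxy : P x y) (heS : e ∉ S)
    (heF : e ∉ F) (hS : Linked ends S = P) (hmax : ∀ f ∈ S \ F, f ≤ e) :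
    bd ends P F (edgeHomotopy e F (Finsupp.single S 1)) +
        edgeHomotopy e F (bd ends P F (Finsupp.single S 1)) =
      Finsupp.single S 1 + ∑ f ∈ S \ F,
        if Linked ends (insert e (S.erase f)) = P ∧ Linked ends (S.erase f) ≠ P then
          -(-1 : ℤ) ^ (nuEdge f (S \ F) + #(S.erase f \ F)) •
            Finsupp.single (insert e (S.erase f)) 1
        else 0 := by
  have hlt : ∀ f ∈ S \ F, f < e := fun f hf =>
    (hmax f hf).lt_of_ne fun h => heS (h ▸ (mem_sdiff.mp hf).1)
  rw [bd_edgeHomotopy_single_of_notMem heS heF hS hlt, edgeHomotopy_bd_single_of_notMem heS,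
    smul_sum, add_assoc, ← sum_add_distrib]
  congr 1
  refine sum_congr rfl fun f hf => ?_
  have hpar : (-1 : ℤ) ^ #(S \ F) = -(-1) ^ #(S.erase f \ F) := by
    rw [← card_erase_add_one hf, ← erase_sdiff_comm, pow_succ, mul_neg_one]
  by_cases hB : Linked ends (S.erase f) = P
  · rw [if_pos (linked_insert_eq hends hxy hB), if_pos hB, if_neg fun h => h.2 hB, smul_smul,
      ← add_smul, hpar]
    convert zero_smul ℤ _
    ring
  · by_cases hA : Linked ends (insert e (S.erase f)) = P
    · rw [if_pos hA, if_neg hB, if_pos ⟨hA, hB⟩, add_zero, smul_smul, hpar]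
      congr 1
      ring
    · rw [if_neg hA, if_neg hB, if_neg fun h => hA h.1, smul_zero, add_zero]

lemma bd_edgeHomotopy_add_eq_self (hends : ends e = s(x, y)) (hxy : P x y)
    (hFxy : Linked ends F x y) (heF : e ∉ F) (hmax : ∀ f ∈ A \ F, f ≤ e)
    (hS : S ∈ cells ends P F A j) :
    bd ends P F (edgeHomotopy e F (Finsupp.single S 1)) +
      edgeHomotopy e F (bd ends P F (Finsupp.single S 1)) = Finsupp.single S 1 := by
  obtain ⟨hFS, hSA, hP, -⟩ := mem_cells.mp hS
  have hmaxS : ∀ f ∈ S \ F, f ≤ e := fun f hf => hmax f (sdiff_subset_sdiff hSA le_rfl hf)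
  have hloop : ∀ T, F ⊆ T → Linked ends (insert e T) = Linked ends T := fun T hT =>
    linked_insert_of_linked hends (linked_mono hT x y hFxy)
  by_cases heS : e ∈ S
  · rw [bd_edgeHomotopy_add_of_mem heS heF hmaxS, if_pos]
    rw [← hloop _ (subset_erase.mpr ⟨hFS, heF⟩), insert_erase heS, hP]
  · rw [bd_edgeHomotopy_add_of_notMem hends hxy heS heF hP hmaxS, sum_eq_zero, add_zero]
    refine fun f hf => if_neg fun h => h.2 ?_
    rw [← hloop _ (subset_erase.mpr ⟨hFS, (mem_sdiff.mp hf).2⟩), h.1]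

lemma exactAt_of_linked (hends : ends e = s(x, y)) (hxy : P x y) (hFxy : Linked ends F x y)
    (he : e ∈ A \ F) (hmax : ∀ f ∈ A \ F, f ≤ e) : ExactAt ends P F A j := by
  intro z hz hdz
  refine ⟨edgeHomotopy e F z, edgeHomotopy_mem_supported hends hxy he hz, ?_⟩
  have := eqOn_supported
    (L := bd ends P F ∘ₗ edgeHomotopy e F + edgeHomotopy e F ∘ₗ bd ends P F) (L' := .id)
    (fun S hS => bd_edgeHomotopy_add_eq_self hends hxy hFxy (mem_sdiff.mp he).2 hmax hS) hz
  simpa [hdz] using this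

end Homotopy

section Contraction

variable [LinearOrder E] {ends : E → Sym2 V} {P : V → V → Prop} {F A S : Finset E} {e : E}
  {x y : V} {j : ℕ} {z : Finset E →₀ ℤ}

variable (ends P) in
def bridgeCells (e : E) (F A : Finset E) (j : ℕ) : Set (Finset E) :=
  {S | S ∈ cells ends P (insert e F) A j ∧ Linked ends (S.erase e) ≠ P}

lemma mem_bridgeCells : S ∈ bridgeCells ends P e F A j ↔
    S ∈ cells ends P (insert e F) A j ∧ Linked ends (S.erase e) ≠ P :=
  Iff.rfl

lemma bridgeCells_subset_cells (heF : e ∉ F) :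
    bridgeCells ends P e F A j ⊆ cells ends P F A (j + 1) := fun S hS => by
  obtain ⟨hFS, hSA, hP, hcard⟩ := mem_cells.mp (mem_bridgeCells.mp hS).1
  have heS : e ∈ S \ F := mem_sdiff.mpr ⟨hFS (mem_insert_self e F), heF⟩
  refine mem_cells.mpr ⟨(subset_insert e F).trans hFS, hSA, hP, ?_⟩
  rw [← hcard, sdiff_insert, card_erase_add_one heS]

lemma bd_eq_bd_insert (heF : e ∉ F) (hmax : ∀ f ∈ A \ F, f ≤ e)
    (hz : z ∈ ℤ[bridgeCells ends P e F A j]) :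
    bd ends P F z = bd ends P (insert e F) z := by
  refine eqOn_supported (fun S hS => ?_) hz
  obtain ⟨hS, hbridge⟩ := mem_bridgeCells.mp hS
  obtain ⟨hFS, hSA, -, -⟩ := mem_cells.mp hS
  have heS : e ∈ S \ F := mem_sdiff.mpr ⟨hFS (mem_insert_self e F), heF⟩
  rw [bd_single, bd_single, ← add_sum_erase _ _ heS, if_neg hbridge, zero_add, sdiff_insert]
  refine sum_congr rfl fun f hf => ?_
  obtain ⟨hfe, hf⟩ := mem_erase.mp hf
  rw [nuEdge_erase_of_lt ((hmax f (sdiff_subset_sdiff hSA le_rfl hf)).lt_of_ne hfe)]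

lemma sub_bd_edgeHomotopy_mem_supported (hends : ends e = s(x, y)) (hxy : P x y)
    (he : e ∈ A \ F) (hmax : ∀ f ∈ A \ F, f ≤ e)
    (hz : z ∈ ℤ[cells ends P F A (j + 1)]) (hdz : bd ends P F z = 0) :
    z - bd ends P F (edgeHomotopy e F z) ∈ ℤ[bridgeCells ends P e F A j] := by
  obtain ⟨heA, heF⟩ := mem_sdiff.mp he
  have := map_mem_of_supported
    (L := .id - (bd ends P F ∘ₗ edgeHomotopy e F + edgeHomotopy e F ∘ₗ bd ends P F))
    (p := ℤ[bridgeCells ends P e F A j]) (fun S hS => ?_) hz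
  · simpa [hdz] using this
  obtain ⟨hFS, hSA, hP, hcard⟩ := mem_cells.mp hS
  have hmaxS : ∀ f ∈ S \ F, f ≤ e := fun f hf => hmax f (sdiff_subset_sdiff hSA le_rfl hf)
  simp only [LinearMap.sub_apply, LinearMap.add_apply, LinearMap.comp_apply, LinearMap.id_apply]
  by_cases heS : e ∈ S
  · rw [bd_edgeHomotopy_add_of_mem heS heF hmaxS]
    split_ifs with hc
    · rw [sub_self]
      exact zero_mem _
    rw [sub_zero]
    refine Finsupp.single_mem_supported ℤ _
      (mem_bridgeCells.mpr ⟨mem_cells.mpr ⟨insert_subset heS hFS, hSA, hP, ?_⟩, hc⟩)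
    rw [sdiff_insert, card_erase_of_mem (mem_sdiff.mpr ⟨heS, heF⟩), hcard, Nat.add_sub_cancel]
  · rw [bd_edgeHomotopy_add_of_notMem hends hxy heS heF hP hmaxS, sub_add_cancel_left]
    refine neg_mem (Submodule.sum_mem _ fun f hf => ?_)
    split_ifs with hc
    · have heSf : e ∉ S.erase f := fun h => heS (mem_of_mem_erase h)
      refine Submodule.smul_mem _ _ (Finsupp.single_mem_supported ℤ _ (mem_bridgeCells.mpr
        ⟨mem_cells.mpr ⟨?_, insert_subset heA ((erase_subset f S).trans hSA), hc.1, ?_⟩,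
          ?_⟩))
      · exact insert_subset_insert e (subset_erase.mpr ⟨hFS, (mem_sdiff.mp hf).2⟩)
      · rw [insert_sdiff_insert, sdiff_insert, erase_eq_of_notMem fun h => heSf (mem_sdiff.mp h).1,
          erase_sdiff_comm, card_erase_of_mem hf, hcard, Nat.add_sub_cancel]
      · rw [erase_insert heSf]
        exact hc.2
    · exact zero_mem _

variable (ends P) in
def contract (e : E) : (Finset E →₀ ℤ) →ₗ[ℤ] Finset E →₀ ℤ :=
  Finsupp.linearCombination ℤ fun S =>
    if Linked ends (S.erase e) = P then Finsupp.single (S.erase e) 1 else 0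

lemma contract_single : contract ends P e (Finsupp.single S 1) =
    if Linked ends (S.erase e) = P then Finsupp.single (S.erase e) 1 else 0 := by
  rw [contract, Finsupp.linearCombination_single, one_smul]

lemma contract_mem_supported (heF : e ∉ F)
    (hz : z ∈ ℤ[cells ends P (insert e F) A j]) :
    contract ends P e z ∈ ℤ[cells ends P F (A.erase e) j] := by
  refine map_mem_of_supported (fun S hS => ?_) hz
  obtain ⟨hFS, hSA, -, hcard⟩ := mem_cells.mp hS
  rw [contract_single]
  split_ifs with hc
  · refine Finsupp.single_mem_supported ℤ _
      (mem_cells.mpr ⟨?_, erase_subset_erase e hSA, hc, ?_⟩)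
    · exact subset_erase.mpr ⟨(subset_insert e F).trans hFS, heF⟩
    · rw [erase_sdiff_comm, ← sdiff_insert, hcard]
  · exact zero_mem _

lemma contract_eq_zero (hz : z ∈ ℤ[bridgeCells ends P e F A j]) :
    contract ends P e z = 0 :=
  eqOn_supported (L' := 0)
    (fun _ hS => by rw [contract_single, if_neg (mem_bridgeCells.mp hS).2]; rfl) hz

lemma mem_supported_bridgeCells (hz : z ∈ ℤ[cells ends P (insert e F) A j])
    (hcz : contract ends P e z = 0) :
    z ∈ ℤ[bridgeCells ends P e F A j] := by
  have heS : ∀ S ∈ z.support, e ∈ S := fun S hS =>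
    (mem_cells.mp (hz hS)).1 (mem_insert_self e F)
  intro T hT
  refine ⟨hz hT, fun hPT => Finsupp.mem_support_iff.mp hT ?_⟩
  have hval : contract ends P e z (T.erase e) = z T := by
    rw [contract, Finsupp.linearCombination_apply, Finsupp.sum, Finsupp.finsetSum_apply,
      sum_eq_single T]
    · simp [hPT]
    · intro S hS hST
      rw [Finsupp.smul_apply]
      split_ifs
      · rw [Finsupp.single_apply, if_neg fun h => hST (erase_injOn' e (heS S hS) (heS T hT) h),
          smul_zero]
      · rw [Finsupp.coe_zero, Pi.zero_apply, smul_zero]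
    · exact fun h => absurd hT h
  rw [← hval, hcz, Finsupp.coe_zero, Pi.zero_apply]

lemma contract_bd_single (hS : Linked ends S = P) :
    contract ends P e (bd ends P (insert e F) (Finsupp.single S 1)) =
      bd ends P F (contract ends P e (Finsupp.single S 1)) := by
  have hterm : ∀ f, ∀ c : ℤ,
      contract ends P e (if Linked ends (S.erase f) = P then c • Finsupp.single (S.erase f) 1
        else 0) =
      if Linked ends ((S.erase e).erase f) = P then c • Finsupp.single ((S.erase e).erase f) 1
        else 0 := by
    intro f c
    rw [erase_right_comm]
    split_ifs with h1 h2 h2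
    · rw [map_smul, contract_single, if_pos h2]
    · rw [map_smul, contract_single, if_neg h2, smul_zero]
    · exact absurd (linked_eq_of_subset_of_subset (erase_subset e _) (erase_subset f S) h2 hS) h1
    · rw [map_zero]
  rw [bd_single, map_sum, sum_congr rfl fun f _ => hterm f _, contract_single]
  split_ifs with he
  · rw [bd_single, erase_sdiff_comm, sdiff_insert]
  · rw [map_zero]
    refine sum_eq_zero fun f _ => if_neg fun h => he ?_
    exact linked_eq_of_subset_of_subset (erase_subset f _) (erase_subset e S) h hS

lemma contract_bd (hz : z ∈ ℤ[cells ends P (insert e F) A j]) :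
    contract ends P e (bd ends P (insert e F) z) = bd ends P F (contract ends P e z) :=
  eqOn_supported (L := contract ends P e ∘ₗ bd ends P (insert e F))
    (L' := bd ends P F ∘ₗ contract ends P e)
    (fun _ hS => contract_bd_single (mem_cells.mp hS).2.2.1) hz

lemma lmapDomain_insert_mem_supported (hends : ends e = s(x, y)) (hxy : P x y) (heA : e ∈ A)
    (hz : z ∈ ℤ[cells ends P F (A.erase e) j]) :
    Finsupp.lmapDomain ℤ ℤ (insert e) z ∈
      ℤ[cells ends P (insert e F) A j] := by
  refine map_mem_of_supported (fun S hS => ?_) hz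
  obtain ⟨hFS, hSA, hP, hcard⟩ := mem_cells.mp hS
  have heS : e ∉ S := fun h => notMem_erase e A (hSA h)
  rw [Finsupp.lmapDomain_apply, Finsupp.mapDomain_single]
  refine Finsupp.single_mem_supported ℤ _ (mem_cells.mpr ⟨insert_subset_insert e hFS,
    insert_subset heA (hSA.trans (erase_subset e A)), linked_insert_eq hends hxy hP, ?_⟩)
  rw [insert_sdiff_insert, sdiff_insert, erase_eq_of_notMem fun h => heS (mem_sdiff.mp h).1, hcard]

lemma contract_lmapDomain_insert (hz : z ∈ ℤ[cells ends P F (A.erase e) j]) :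
    contract ends P e (Finsupp.lmapDomain ℤ ℤ (insert e) z) = z :=
  eqOn_supported (L := contract ends P e ∘ₗ Finsupp.lmapDomain ℤ ℤ (insert e)) (L' := .id)
    (fun S hS => by
      obtain ⟨-, hSA, hP, -⟩ := mem_cells.mp hS
      have heS : e ∉ S := fun h => notMem_erase e A (hSA h)
      simp [Finsupp.mapDomain_single, contract_single, erase_insert heS, hP]) hz

end Contraction

section Exactness

variable [LinearOrder E] {ends : E → Sym2 V} {P : V → V → Prop} {F A : Finset E} {e : E}
  {x y : V} {j : ℕ}

lemma exactAt_of_cells_eq_empty (h : cells ends P F A j = ∅) : ExactAt ends P F A j := by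
  intro z hz _
  rw [h, Finsupp.supported_empty, Submodule.mem_bot] at hz
  exact ⟨0, zero_mem _, by rw [map_zero, hz]⟩

lemma exactAt_self (hj : j + numClasses P ≠ numClasses (Linked ends F)) : ExactAt ends P F F j :=
  exactAt_of_cells_eq_empty <| Set.eq_empty_of_forall_notMem fun S hS => by
    obtain ⟨hFS, hSF, hP, rfl⟩ := mem_cells.mp hS
    obtain rfl := subset_antisymm hSF hFS
    simp [hP] at hj

lemma exactAt_zero (h : Linked ends F ≠ P) : ExactAt ends P F A 0 :=
  exactAt_of_cells_eq_empty <| Set.eq_empty_of_forall_notMem fun S hS => by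
    obtain ⟨hFS, -, hP, hcard⟩ := mem_cells.mp hS
    obtain rfl := subset_antisymm (sdiff_eq_empty_iff_subset.mp (card_eq_zero.mp hcard)) hFS
    exact h hP

lemma cells_erase (hends : ends e = s(x, y)) (hxy : ¬ P x y) :
    cells ends P F (A.erase e) j = cells ends P F A j := by
  ext S
  simp only [mem_cells, subset_erase]
  refine ⟨fun ⟨hFS, ⟨hSA, _⟩, hP, hcard⟩ => ⟨hFS, hSA, hP, hcard⟩,
    fun ⟨hFS, hSA, hP, hcard⟩ => ⟨hFS, ⟨hSA, fun he => hxy ?_⟩, hP, hcard⟩⟩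
  rw [← hP]
  exact linked_of_mem he hends

lemma exactAt_of_exactAt_erase (hends : ends e = s(x, y)) (hxy : ¬ P x y)
    (h : ExactAt ends P F (A.erase e) j) : ExactAt ends P F A j := by
  simpa only [ExactAt, cells_erase hends hxy] using h

lemma exists_mem_supported_bridgeCells_bd_eq (hends : ends e = s(x, y)) (hxy : P x y)
    (he : e ∈ A \ F) (hmax : ∀ f ∈ A \ F, f ≤ e) (hcontr : ExactAt ends P (insert e F) A j)
    (hdel : ExactAt ends P F (A.erase e) (j + 1)) {q : Finset E →₀ ℤ}
    (hq : q ∈ ℤ[bridgeCells ends P e F A j]) (hdq : bd ends P F q = 0) :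
    ∃ u ∈ ℤ[bridgeCells ends P e F A (j + 1)], bd ends P F u = q := by
  obtain ⟨heA, heF⟩ := mem_sdiff.mp he
  obtain ⟨u, hu, hdu⟩ := hcontr q (Finsupp.supported_mono (fun S hS => hS.1) hq)
    (by rwa [← bd_eq_bd_insert heF hmax hq])
  obtain ⟨v, hv, hdv⟩ := hdel (contract ends P e u) (contract_mem_supported heF hu)
    (by rw [← contract_bd hu, hdu, contract_eq_zero hq])
  have hσv := lmapDomain_insert_mem_supported hends hxy heA hv
  have hu' : u - bd ends P (insert e F) (Finsupp.lmapDomain ℤ ℤ (insert e) v) ∈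
      ℤ[bridgeCells ends P e F A (j + 1)] := by
    refine mem_supported_bridgeCells (sub_mem hu (bd_mem_supported hσv)) ?_
    rw [map_sub, contract_bd hσv, contract_lmapDomain_insert hv, hdv, sub_self]
  refine ⟨_, hu', ?_⟩
  rw [bd_eq_bd_insert heF hmax hu', map_sub, hdu, bd_bd hσv, sub_zero]

lemma exactAt_succ_of_exactAt_insert_of_exactAt_erase (hends : ends e = s(x, y)) (hxy : P x y)
    (he : e ∈ A \ F) (hmax : ∀ f ∈ A \ F, f ≤ e) (hcontr : ExactAt ends P (insert e F) A j)
    (hdel : ExactAt ends P F (A.erase e) (j + 1)) : ExactAt ends P F A (j + 1) := by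
  intro z hz hdz
  have hhz := edgeHomotopy_mem_supported hends hxy he hz
  obtain ⟨u, hu, hdu⟩ := exists_mem_supported_bridgeCells_bd_eq hends hxy he hmax hcontr hdel
    (sub_bd_edgeHomotopy_mem_supported hends hxy he hmax hz hdz)
    (by rw [map_sub, hdz, bd_bd hhz, sub_zero])
  refine ⟨edgeHomotopy e F z + u, add_mem hhz ?_, by rw [map_add, hdu, add_sub_cancel]⟩
  exact Finsupp.supported_mono (bridgeCells_subset_cells (mem_sdiff.mp he).2) hu

theorem exactAt_of_add_numClasses_ne [Finite V] (hFA : F ⊆ A)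
    (hj : j + numClasses P ≠ numClasses (Linked ends F)) : ExactAt ends P F A j := by
  obtain ⟨D, hD⟩ : ∃ D, A \ F = D := ⟨_, rfl⟩
  induction D using Finset.induction_on_max generalizing F A j with
  | empty =>
    obtain rfl : A = F := subset_antisymm (sdiff_eq_empty_iff_subset.mp hD) hFA
    exact exactAt_self hj
  | insert e D hlt ih =>
    have heD : e ∉ D := fun h => lt_irrefl e (hlt e h)
    have he : e ∈ A \ F := hD ▸ mem_insert_self e D
    have hmax : ∀ f ∈ A \ F, f ≤ e := fun f hf => by
      rcases mem_insert.mp (hD ▸ hf) with rfl | hf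
      exacts [le_rfl, (hlt f hf).le]
    obtain ⟨heA, heF⟩ := mem_sdiff.mp he
    have hdel := ih (subset_erase.mpr ⟨hFA, heF⟩) hj
      (by rw [erase_sdiff_comm, hD, erase_insert heD])
    obtain ⟨x, y, hends⟩ := (Sym2.exists (f := fun z => ends e = z)).mp ⟨_, rfl⟩
    by_cases hxy : P x y
    · by_cases hFxy : Linked ends F x y
      · exact exactAt_of_linked hends hxy hFxy he hmax
      cases j with
      | zero => exact exactAt_zero fun h => hFxy (h ▸ hxy)
      | succ j =>
        have := numClasses_insert hends hFxy
        exact exactAt_succ_of_exactAt_insert_of_exactAt_erase hends hxy he hmax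
          (ih (insert_subset heA hFA) (by omega) (by rw [sdiff_insert, hD, erase_insert heD])) hdel
    · exact exactAt_of_exactAt_erase hends hxy hdel

end Exactness

section ConnectedSubgraphs

variable {ends : E → Sym2 V} {j : ℕ}

variable (ends) in
def toChains (i : ℕ) : CConn ends i →ₗ[ℤ] Finset E →₀ ℤ :=
  Finsupp.lmapDomain ℤ ℤ fun S : ConnSub ends i => S.1

lemma toChains_single (i : ℕ) (T : ConnSub ends i) (c : ℤ) :
    toChains ends i (Finsupp.single T c) = Finsupp.single T.1 c :=
  Finsupp.mapDomain_single

lemma toChains_injective (i : ℕ) : Function.Injective (toChains ends i) :=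
  Finsupp.mapDomain_injective Subtype.val_injective

variable [LinearOrder E]

lemma range_toChains [Fintype E] (i : ℕ) :
    LinearMap.range (toChains ends i) = ℤ[cells ends ⊤ ∅ univ i] := by
  rw [LinearMap.range_eq_map, ← Finsupp.supported_univ, toChains, Finsupp.lmapDomain_supported,
    Set.image_univ]
  congr 1
  ext S
  simp [ConnSub, mem_cells, isConn_iff_linked_eq_top, and_comm]

lemma bd_toChains (i : ℕ) (z : CConn ends (i + 1)) :
    bd ends ⊤ ∅ (toChains ends (i + 1) z) = toChains ends i (bdry ends i z) := by
  suffices h :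
      bd ends ⊤ ∅ ∘ₗ toChains ends (i + 1) = toChains ends i ∘ₗ bdry ends i from
    LinearMap.congr_fun h z
  refine Finsupp.lhom_ext' fun T => LinearMap.ext_ring ?_
  simp only [LinearMap.comp_apply, Finsupp.lsingle_apply, toChains_single, bdry,
    Finsupp.lsum_single, LinearMap.toSpanSingleton_apply, one_smul, map_sum, bd_single, sdiff_empty]
  rw [← sum_attach]
  refine sum_congr rfl fun f _ => ?_
  by_cases hf : IsConn ends (T.1.erase f)
  · rw [dif_pos hf, if_pos (isConn_iff_linked_eq_top.mp hf)]
    erw [map_smul, toChains_single]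
  · rw [dif_neg hf, if_neg (mt isConn_iff_linked_eq_top.mpr hf), map_zero]

lemma bd_toChains_zero [Fintype E] (z : CConn ends 0) : bd ends ⊤ ∅ (toChains ends 0 z) = 0 :=
  bd_eq_zero_of_mem_supported_cells_zero
    (range_toChains (ends := ends) 0 ▸ LinearMap.mem_range_self _ z)

lemma mem_range_bdry [Fintype V] [Fintype E] (hj : j ≠ Fintype.card V - 1) (z : CConn ends j)
    (hz : bd ends ⊤ ∅ (toChains ends j z) = 0) : z ∈ LinearMap.range (bdry ends j) := by
  have hexact : ExactAt ends ⊤ ∅ univ j := exactAt_of_add_numClasses_ne (empty_subset _) <| by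
    have := numClasses_top_add_card_sub_one (V := V)
    rw [numClasses_linked_empty, Nat.card_eq_fintype_card] at *
    omega
  obtain ⟨w, hw, hdw⟩ :=
    hexact _ (range_toChains (ends := ends) j ▸ LinearMap.mem_range_self _ z) hz
  obtain ⟨b, rfl⟩ :=
    LinearMap.mem_range.mp ((range_toChains (ends := ends) (j + 1)).symm ▸ hw)
  exact ⟨b, toChains_injective j (by rw [← bd_toChains, hdw])⟩

end ConnectedSubgraphs

end ConnComplex

theorem homology_concentrated_in_top_degree_general
    [Fintype V] [Fintype E] [LinearOrder E]
    (ends : E → Sym2 V) :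
    ((0 : ℕ) ≠ Fintype.card V - 1 → Subsingleton (ConnH0 ends)) ∧
      ∀ i : ℕ, i + 1 ≠ Fintype.card V - 1 → Subsingleton (ConnH ends i) := by
  refine ⟨fun h0 => ?_, fun i hi => ?_⟩ <;> rw [Submodule.Quotient.subsingleton_iff, eq_top_iff]
  · exact fun z _ => ConnComplex.mem_range_bdry h0 z (ConnComplex.bd_toChains_zero z)
  · rintro ⟨z, hz⟩ -
    exact ConnComplex.mem_range_bdry hi z
      (by rw [ConnComplex.bd_toChains, LinearMap.mem_ker.mp hz, map_zero])

theorem homology_concentrated_in_top_degree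
    [Fintype V] [DecidableEq V] [Fintype E] [LinearOrder E]
    (ends : E → Sym2 V) (hconn : IsConn ends (Finset.univ : Finset E)) :
    ((0 : ℕ) ≠ Fintype.card V - 1 → Subsingleton (ConnH0 ends)) ∧
      ∀ i : ℕ, i + 1 ≠ Fintype.card V - 1 → Subsingleton (ConnH ends i) :=
  homology_concentrated_in_top_degree_general ends

end
end

section
/- If a connected multigraph Γ contains a loop (an edge whose two endpoints coincide), then the homology of C_conn(Γ) is trivial: H_i(C_conn(Γ)) = 0 for every i. -/
/-!
Statement 10. If a connected multigraph `Γ` contains a loop (an edge whose two endpoints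
coincide), then the homology of the complex of connected subgraphs `C_conn(Γ)` is trivial:
`H_i(C_conn(Γ)) = 0` for every `i`.
-/

noncomputable section

open scoped Classical

variable {V E : Type}

/-!
Because `e₀` is a loop, adding `e₀` to or deleting it from `S` does not change whether `(V, S)` is
connected. So coning off with `e₀`, `h(S) = (-1)^ν(e₀,S) (S ∪ {e₀})` for `e₀ ∉ S` and `h(S) = 0`
otherwise, is well defined on `C_conn(Γ)`, and as for the cone on a simplex it satisfies
`d h + h d = id` (and `d h = id` in degree `0`). The complex is therefore contractible.
-/

theorem LinearMap.ker_le_range_of_comp_add_comp_eq_id {R A B C : Type*} [Semiring R]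
    [AddCommMonoid A] [AddCommMonoid B] [AddCommMonoid C] [Module R A] [Module R B] [Module R C]
    {f : B →ₗ[R] C} {g : A →ₗ[R] B} {s : B →ₗ[R] A} {t : C →ₗ[R] B}
    (h : g ∘ₗ s + t ∘ₗ f = LinearMap.id) : LinearMap.ker f ≤ LinearMap.range g := by
  intro x hx
  refine ⟨s x, ?_⟩
  simpa [LinearMap.mem_ker.1 hx] using LinearMap.congr_fun h x

theorem IsConn.mono {ends : E → Sym2 V} {S T : Finset E} (hST : S ⊆ T) (h : IsConn ends S) :
    IsConn ends T := fun a b =>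
  Relation.ReflTransGen.mono (fun _ _ ⟨e, he, hx⟩ => ⟨e, hST he, hx⟩) _ _ (h a b)

theorem IsConn.erase_of_isDiag [DecidableEq E] {ends : E → Sym2 V} {e₀ : E}
    (hloop : (ends e₀).IsDiag) {S : Finset E} (h : IsConn ends S) : IsConn ends (S.erase e₀) := by
  have step : StepRel ends S ≤ Relation.ReflTransGen (StepRel ends (S.erase e₀)) := by
    rintro x y ⟨e, he, hxy⟩
    by_cases hee : e = e₀
    · subst hee
      rw [hxy, Sym2.mk_isDiag_iff] at hloop
      rw [hloop]
    · exact .single ⟨e, Finset.mem_erase.2 ⟨hee, he⟩, hxy⟩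
  exact fun a b => Relation.reflTransGen_closed step a b (h a b)

theorem isConn_insert_iff_of_isDiag [DecidableEq E] {ends : E → Sym2 V} {e₀ : E}
    (hloop : (ends e₀).IsDiag) {S : Finset E} : IsConn ends (insert e₀ S) ↔ IsConn ends S := by
  refine ⟨fun h => ?_, IsConn.mono (Finset.subset_insert _ _)⟩
  simpa using (h.erase_of_isDiag hloop).mono (Finset.erase_insert_subset e₀ S)

theorem nuEdge_insert [DecidableEq E] [LinearOrder E] {a : E} {S : Finset E} (h : a ∉ S) (e : E) :
    nuEdge e (insert a S) = nuEdge e S + if a < e then 1 else 0 := by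
  unfold nuEdge
  rw [Finset.filter_insert]
  split_ifs
  · exact Finset.card_insert_of_notMem fun ha => h (Finset.mem_of_mem_filter _ ha)
  · rfl

theorem nuEdge_insert_self [DecidableEq E] [LinearOrder E] {a : E} {S : Finset E} (h : a ∉ S) :
    nuEdge a (insert a S) = nuEdge a S := by
  simp [nuEdge_insert h]

theorem nuEdge_erase_self [DecidableEq E] [LinearOrder E] (a : E) (S : Finset E) :
    nuEdge a (S.erase a) = nuEdge a S := by
  by_cases ha : a ∈ S
  · rw [← nuEdge_insert_self (S.notMem_erase a), Finset.insert_erase ha]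
  · rw [Finset.erase_eq_of_notMem ha]

/-- Exactly one of `a < e`, `e < a` holds, so the two orders of adding `a` and deleting `e`
give opposite signs. -/
theorem neg_one_pow_nuEdge_insert_mul [DecidableEq E] [LinearOrder E] {a e : E} {S : Finset E}
    (ha : a ∉ S) (he : e ∈ S) :
    (-1 : ℤ) ^ nuEdge a S * (-1) ^ nuEdge e (insert a S) =
      -((-1) ^ nuEdge e S * (-1) ^ nuEdge a (S.erase e)) := by
  have hS : nuEdge a S = nuEdge a (S.erase e) + if e < a then 1 else 0 := by
    rw [← nuEdge_insert (S.notMem_erase e), Finset.insert_erase he]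
  have hne : a ≠ e := fun h => ha (h ▸ he)
  rw [hS, nuEdge_insert ha]
  rcases hne.lt_or_gt with h | h <;> simp [h, h.not_gt, pow_succ] <;> ring

def chainOf (ends : E → Sym2 V) (i : ℕ) (T : Finset E) : CConn ends i :=
  if h : T.card = i ∧ IsConn ends T then Finsupp.single (α := ConnSub ends i) ⟨T, h⟩ 1 else 0

section Chains

variable {ends : E → Sym2 V} {i : ℕ}

theorem chainOf_of_isConn {T : Finset E} (h : T.card = i ∧ IsConn ends T) :
    chainOf ends i T = Finsupp.single (α := ConnSub ends i) ⟨T, h⟩ 1 :=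
  dif_pos h

theorem chainOf_val (S : ConnSub ends i) : chainOf ends i S.1 = Finsupp.single S 1 :=
  chainOf_of_isConn S.2

theorem chainOf_eq_zero {T : Finset E} (h : ¬(T.card = i ∧ IsConn ends T)) :
    chainOf ends i T = 0 :=
  dif_neg h

theorem bdry_single [DecidableEq E] [LinearOrder E] (S : ConnSub ends (i + 1)) :
    bdry ends i (Finsupp.single S 1) =
      ∑ e ∈ S.1, (-1 : ℤ) ^ nuEdge e S.1 • chainOf ends i (S.1.erase e) := by
  rw [bdry, Finsupp.lsum_single, LinearMap.toSpanSingleton_apply, one_smul,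
    ← Finset.sum_attach S.1]
  refine Finset.sum_congr rfl fun e _ => ?_
  by_cases hc : IsConn ends (S.1.erase e)
  · rw [dif_pos hc, chainOf, dif_pos ⟨by simp [Finset.card_erase_of_mem e.2, S.2.1], hc⟩]
    rfl
  · rw [dif_neg hc, chainOf_eq_zero (fun h => hc h.2), smul_zero]

theorem bdry_chainOf [DecidableEq E] [LinearOrder E] (T : Finset E) :
    bdry ends i (chainOf ends (i + 1) T) =
      ∑ e ∈ T, (-1 : ℤ) ^ nuEdge e T • chainOf ends i (T.erase e) := by
  by_cases hT : T.card = i + 1 ∧ IsConn ends T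
  · rw [chainOf_of_isConn hT]
    exact bdry_single _
  rw [chainOf_eq_zero hT, map_zero]
  refine (Finset.sum_eq_zero fun e he => ?_).symm
  suffices ¬((T.erase e).card = i ∧ IsConn ends (T.erase e)) by
    rw [chainOf_eq_zero this, smul_zero]
  refine fun h => hT ⟨?_, h.2.mono (Finset.erase_subset e T)⟩
  have := Finset.card_pos.2 ⟨e, he⟩
  rw [Finset.card_erase_of_mem he] at h
  omega

end Chains

def loopCone [DecidableEq E] [LinearOrder E] (ends : E → Sym2 V) (e₀ : E) (i : ℕ) :
    CConn ends i →ₗ[ℤ] CConn ends (i + 1) :=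
  Finsupp.linearCombination ℤ fun S : ConnSub ends i =>
    if e₀ ∈ S.1 then 0 else (-1 : ℤ) ^ nuEdge e₀ S.1 • chainOf ends (i + 1) (insert e₀ S.1)

section Homotopy

variable [DecidableEq E] [LinearOrder E] {ends : E → Sym2 V} {e₀ : E}

theorem loopCone_chainOf (hloop : (ends e₀).IsDiag) (i : ℕ) (T : Finset E) :
    loopCone ends e₀ i (chainOf ends i T) =
      if e₀ ∈ T then 0 else (-1 : ℤ) ^ nuEdge e₀ T • chainOf ends (i + 1) (insert e₀ T) := by
  by_cases hT : T.card = i ∧ IsConn ends T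
  · rw [chainOf_of_isConn hT, loopCone]
    exact (Finsupp.linearCombination_single ..).trans (one_smul ..)
  rw [chainOf_eq_zero hT, map_zero]
  split_ifs with h₀
  · rfl
  rw [chainOf_eq_zero, smul_zero]
  rwa [Finset.card_insert_of_notMem h₀, isConn_insert_iff_of_isDiag hloop,
    Nat.add_right_cancel_iff]

theorem bdry_loopCone_chainOf_of_notMem (hloop : (ends e₀).IsDiag) (i : ℕ) {T : Finset E}
    (h₀ : e₀ ∉ T) :
    bdry ends i (loopCone ends e₀ i (chainOf ends i T)) = chainOf ends i T +
      ∑ e ∈ T, ((-1 : ℤ) ^ nuEdge e₀ T * (-1) ^ nuEdge e (insert e₀ T)) •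
        chainOf ends i (insert e₀ (T.erase e)) := by
  rw [loopCone_chainOf hloop, if_neg h₀, map_smul, bdry_chainOf, Finset.sum_insert h₀, smul_add,
    Finset.erase_insert h₀, nuEdge_insert_self h₀, smul_smul, ← pow_add, Even.neg_one_pow ⟨_, rfl⟩,
    one_smul, Finset.smul_sum]
  refine congrArg _ (Finset.sum_congr rfl fun e he => ?_)
  rw [smul_smul, Finset.erase_insert_of_ne (ne_of_mem_of_not_mem he h₀).symm]

theorem bdry_comp_loopCone_zero (hloop : (ends e₀).IsDiag) :
    bdry ends 0 ∘ₗ loopCone ends e₀ 0 = LinearMap.id := by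
  refine Finsupp.lhom_ext' fun S => LinearMap.ext_ring ?_
  have hS : S.1 = ∅ := Finset.card_eq_zero.1 S.2.1
  simp only [LinearMap.comp_apply, Finsupp.lsingle_apply, LinearMap.id_apply, ← chainOf_val]
  rw [bdry_loopCone_chainOf_of_notMem hloop 0 (by simp [hS]), hS, Finset.sum_empty, add_zero]

theorem bdry_loopCone_add_loopCone_bdry_chainOf (hloop : (ends e₀).IsDiag) (i : ℕ)
    (T : Finset E) :
    bdry ends (i + 1) (loopCone ends e₀ (i + 1) (chainOf ends (i + 1) T)) +
      loopCone ends e₀ i (bdry ends i (chainOf ends (i + 1) T)) = chainOf ends (i + 1) T := by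
  by_cases h₀ : e₀ ∈ T
  · rw [loopCone_chainOf hloop, if_pos h₀, map_zero, zero_add, bdry_chainOf, map_sum,
      Finset.sum_eq_single_of_mem e₀ h₀]
    · rw [map_smul, loopCone_chainOf hloop, if_neg (T.notMem_erase e₀), Finset.insert_erase h₀,
        nuEdge_erase_self, smul_smul, ← pow_add, Even.neg_one_pow ⟨_, rfl⟩, one_smul]
    · intro e _ he
      rw [map_smul, loopCone_chainOf hloop, if_pos (Finset.mem_erase.2 ⟨Ne.symm he, h₀⟩),
        smul_zero]
  · rw [bdry_loopCone_chainOf_of_notMem hloop (i + 1) h₀, bdry_chainOf, map_sum, add_assoc,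
      ← Finset.sum_add_distrib, Finset.sum_eq_zero, add_zero]
    intro e he
    rw [map_smul, loopCone_chainOf hloop, if_neg fun h => h₀ (Finset.mem_of_mem_erase h),
      smul_smul, neg_one_pow_nuEdge_insert_mul h₀ he, neg_smul, neg_add_cancel]

theorem bdry_comp_loopCone_add_loopCone_comp_bdry (hloop : (ends e₀).IsDiag) (i : ℕ) :
    bdry ends (i + 1) ∘ₗ loopCone ends e₀ (i + 1) + loopCone ends e₀ i ∘ₗ bdry ends i =
      LinearMap.id := by
  refine Finsupp.lhom_ext' fun S => LinearMap.ext_ring ?_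
  simp only [LinearMap.comp_apply, LinearMap.add_apply, Finsupp.lsingle_apply, LinearMap.id_apply,
    ← chainOf_val]
  exact bdry_loopCone_add_loopCone_bdry_chainOf hloop i S.1

end Homotopy

theorem homology_trivial_of_loop_general
    [LinearOrder E]
    (ends : E → Sym2 V)
    (e₀ : E) (hloop : (ends e₀).IsDiag) :
    Subsingleton (ConnH0 ends) ∧ ∀ i : ℕ, Subsingleton (ConnH ends i) := by
  refine ⟨Submodule.Quotient.subsingleton_iff.2 ?_,
    fun i => Submodule.Quotient.subsingleton_iff.2 ?_⟩
  · exact LinearMap.range_eq_top.2 fun x =>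
      ⟨loopCone ends e₀ 0 x, LinearMap.congr_fun (bdry_comp_loopCone_zero hloop) x⟩
  · exact Submodule.comap_subtype_eq_top.2 <| LinearMap.ker_le_range_of_comp_add_comp_eq_id <|
      bdry_comp_loopCone_add_loopCone_comp_bdry hloop i

theorem homology_trivial_of_loop
    [Fintype V] [DecidableEq V] [Fintype E] [LinearOrder E]
    (ends : E → Sym2 V) (hconn : IsConn ends (Finset.univ : Finset E))
    (e₀ : E) (hloop : (ends e₀).IsDiag) :
    Subsingleton (ConnH0 ends) ∧ ∀ i : ℕ, Subsingleton (ConnH ends i) :=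
  homology_trivial_of_loop_general ends e₀ hloop

end
end
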